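/- The element C := XYK is central in the quotient algebra A/(φ), where φ = EY − qYE. -/

import Mathlib

/-- Generators of the quantum spatial ageing algebra. -/
inductive QGen : Type
  | E | K | Kinv | X | Y

open FreeAlgebra in
/-- Defining relations of the quantum spatial ageing algebra
`EK = q⁻²KE`, `XK = q⁻¹KX`, `YK = qKY`, `EX = qXE`, `EY = X + q⁻¹YE`, `qYX = XY`,
together with `K K⁻¹ = K⁻¹ K = 1`. -/
inductive QSARel (k : Type) [Field k] (q : k) :
    FreeAlgebra k QGen → FreeAlgebra k QGen → Prop
  | KKinv : QSARel k q (ι k QGen.K * ι k QGen.Kinv) 1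
  | KinvK : QSARel k q (ι k QGen.Kinv * ι k QGen.K) 1
  | EK : QSARel k q (ι k QGen.E * ι k QGen.K) ((q ^ 2)⁻¹ • (ι k QGen.K * ι k QGen.E))
  | XK : QSARel k q (ι k QGen.X * ι k QGen.K) (q⁻¹ • (ι k QGen.K * ι k QGen.X))
  | YK : QSARel k q (ι k QGen.Y * ι k QGen.K) (q • (ι k QGen.K * ι k QGen.Y))
  | EX : QSARel k q (ι k QGen.E * ι k QGen.X) (q • (ι k QGen.X * ι k QGen.E))
  | EY : QSARel k q (ι k QGen.E * ι k QGen.Y)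
      (ι k QGen.X + q⁻¹ • (ι k QGen.Y * ι k QGen.E))
  | YX : QSARel k q (q • (ι k QGen.Y * ι k QGen.X)) (ι k QGen.X * ι k QGen.Y)

/-- The quantum spatial ageing algebra `𝒜 = 𝕂_q[X,Y] ⋊ U_q^{≥0}(sl₂)`. -/
noncomputable abbrev QSA (k : Type) [Field k] (q : k) : Type := RingQuot (QSARel k q)

noncomputable def Egen (k : Type) [Field k] (q : k) : QSA k q :=
  RingQuot.mkAlgHom k (QSARel k q) (FreeAlgebra.ι k QGen.E)
noncomputable def Kgen (k : Type) [Field k] (q : k) : QSA k q :=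
  RingQuot.mkAlgHom k (QSARel k q) (FreeAlgebra.ι k QGen.K)
noncomputable def Kinvgen (k : Type) [Field k] (q : k) : QSA k q :=
  RingQuot.mkAlgHom k (QSARel k q) (FreeAlgebra.ι k QGen.Kinv)
noncomputable def Xgen (k : Type) [Field k] (q : k) : QSA k q :=
  RingQuot.mkAlgHom k (QSARel k q) (FreeAlgebra.ι k QGen.X)
noncomputable def Ygen (k : Type) [Field k] (q : k) : QSA k q :=
  RingQuot.mkAlgHom k (QSARel k q) (FreeAlgebra.ι k QGen.Y)

/-- The normal element `φ = EY - qYE`. -/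
noncomputable def phi (k : Type) [Field k] (q : k) : QSA k q :=
  Egen k q * Ygen k q - q • (Ygen k q * Egen k q)

/-!
In `𝒜`, conjugation by each of `K^{±1}`, `X`, `Y` rescales `X`, `Y`, `K` by scalars whose product
is `1`, so each of them commutes with `C = XYK` on the nose. For `E` the relations give
`CE - EC = -q X φ K`, which lies in `(φ)`. Since the generators generate `𝒜`, the elements
commuting with `C` modulo `(φ)` form all of `𝒜`.
-/

theorem TwoSidedIdeal.mul_sub_mul_mem_of_mem_adjoin {R A : Type*} [CommSemiring R] [Ring A]
    [Algebra R A] (I : TwoSidedIdeal A) {c : A} {s : Set A} (hs : ∀ g ∈ s, c * g - g * c ∈ I)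
    {a : A} (ha : a ∈ Algebra.adjoin R s) : c * a - a * c ∈ I := by
  induction ha using Algebra.adjoin_induction with
  | mem g hg => exact hs g hg
  | algebraMap r => simp [Algebra.commutes r c]
  | add x y _ _ hx hy =>
    simpa only [mul_add, add_mul, add_sub_add_comm] using I.add_mem hx hy
  | mul x y _ _ hx hy =>
    have h : c * (x * y) - x * y * c = (c * x - x * c) * y + x * (c * y - y * c) := by
      noncomm_ring
    exact h ▸ I.add_mem (I.mul_mem_right _ _ hx) (I.mul_mem_left _ _ hy)

theorem RingQuot.adjoin_range_mkAlgHom_comp_ι {R X : Type*} [CommSemiring R]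
    (r : FreeAlgebra R X → FreeAlgebra R X → Prop) :
    Algebra.adjoin R (Set.range (mkAlgHom R r ∘ FreeAlgebra.ι R)) = ⊤ := by
  rw [Set.range_comp, Algebra.adjoin_image, FreeAlgebra.adjoin_range_ι, Algebra.map_top,
    AlgHom.range_eq_top]
  exact mkAlgHom_surjective R r

section QCommute

variable {R A : Type*} [CommSemiring R] [Semiring A] [Algebra R A]

theorem commute_mul_mul_of_mul_eq_smul {g x y z : A} {α β γ : R}
    (hx : g * x = α • (x * g)) (hy : g * y = β • (y * g)) (hz : g * z = γ • (z * g))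
    (hαβγ : α * β * γ = 1) : Commute g (x * y * z) :=
  calc g * (x * y * z) = α • x * ((g * y) * z) := by
        rw [← mul_assoc, ← mul_assoc, hx]; simp only [smul_mul_assoc, mul_assoc]
    _ = (α * β) • x * y * (g * z) := by
        rw [hy]; simp only [smul_mul_assoc, mul_smul_comm, smul_smul, mul_assoc, mul_comm β]
    _ = x * y * z * g := by
        rw [hz, mul_smul_comm, smul_mul_assoc, smul_mul_assoc, smul_smul, mul_comm γ, hαβγ,
          one_smul]
        simp only [mul_assoc]

theorem mul_eq_smul_of_mul_eq_smul_of_inverse {u u' x : A} {α : R} (hu : u * u' = 1)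
    (hu' : u' * u = 1) (h : x * u = α • (u * x)) : u' * x = α • (x * u') :=
  calc u' * x = u' * (x * u) * u' := by rw [mul_assoc, mul_assoc, hu, mul_one]
    _ = α • (x * u') := by
        rw [h, mul_smul_comm, smul_mul_assoc, ← mul_assoc, hu', one_mul]

end QCommute

section Relations

variable (k : Type) [Field k] (q : k)

theorem Kgen_mul_Kinvgen : Kgen k q * Kinvgen k q = 1 := by
  simpa [Kgen, Kinvgen] using RingQuot.mkAlgHom_rel k (QSARel.KKinv (q := q))

theorem Kinvgen_mul_Kgen : Kinvgen k q * Kgen k q = 1 := by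
  simpa [Kgen, Kinvgen] using RingQuot.mkAlgHom_rel k (QSARel.KinvK (q := q))

theorem Egen_mul_Kgen : Egen k q * Kgen k q = (q ^ 2)⁻¹ • (Kgen k q * Egen k q) := by
  simpa [Egen, Kgen] using RingQuot.mkAlgHom_rel k (QSARel.EK (q := q))

theorem Xgen_mul_Kgen : Xgen k q * Kgen k q = q⁻¹ • (Kgen k q * Xgen k q) := by
  simpa [Xgen, Kgen] using RingQuot.mkAlgHom_rel k (QSARel.XK (q := q))

theorem Ygen_mul_Kgen : Ygen k q * Kgen k q = q • (Kgen k q * Ygen k q) := by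
  simpa [Ygen, Kgen] using RingQuot.mkAlgHom_rel k (QSARel.YK (q := q))

theorem Egen_mul_Xgen : Egen k q * Xgen k q = q • (Xgen k q * Egen k q) := by
  simpa [Egen, Xgen] using RingQuot.mkAlgHom_rel k (QSARel.EX (q := q))

theorem Egen_mul_Ygen : Egen k q * Ygen k q = Xgen k q + q⁻¹ • (Ygen k q * Egen k q) := by
  simpa [Egen, Xgen, Ygen] using RingQuot.mkAlgHom_rel k (QSARel.EY (q := q))

theorem Xgen_mul_Ygen : Xgen k q * Ygen k q = q • (Ygen k q * Xgen k q) := by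
  simpa [Xgen, Ygen] using (RingQuot.mkAlgHom_rel k (QSARel.YX (q := q))).symm

theorem phi_eq : phi k q = Xgen k q + (q⁻¹ - q) • (Ygen k q * Egen k q) := by
  rw [phi, Egen_mul_Ygen]; module

variable {k q} (hq : q ≠ 0)
include hq

theorem Kgen_mul_Egen : Kgen k q * Egen k q = q ^ 2 • (Egen k q * Kgen k q) :=
  ((eq_inv_smul_iff₀ (pow_ne_zero 2 hq)).mp (Egen_mul_Kgen k q)).symm

theorem Kgen_mul_Xgen : Kgen k q * Xgen k q = q • (Xgen k q * Kgen k q) :=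
  ((eq_inv_smul_iff₀ hq).mp (Xgen_mul_Kgen k q)).symm

theorem Kgen_mul_Ygen : Kgen k q * Ygen k q = q⁻¹ • (Ygen k q * Kgen k q) :=
  (eq_inv_smul_iff₀ hq).mpr (Ygen_mul_Kgen k q).symm

theorem Ygen_mul_Xgen : Ygen k q * Xgen k q = q⁻¹ • (Xgen k q * Ygen k q) :=
  (eq_inv_smul_iff₀ hq).mpr (Xgen_mul_Ygen k q).symm

end Relations

section Casimir

variable {k : Type} [Field k] {q : k} (hq : q ≠ 0)
include hq

theorem Kgen_commute_Xgen_mul_Ygen_mul_Kgen :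
    Commute (Kgen k q) (Xgen k q * Ygen k q * Kgen k q) :=
  commute_mul_mul_of_mul_eq_smul (Kgen_mul_Xgen hq) (Kgen_mul_Ygen hq) (one_smul k _).symm
    (by field_simp)

theorem Kinvgen_commute_Xgen_mul_Ygen_mul_Kgen :
    Commute (Kinvgen k q) (Xgen k q * Ygen k q * Kgen k q) :=
  commute_mul_mul_of_mul_eq_smul
    (mul_eq_smul_of_mul_eq_smul_of_inverse (Kgen_mul_Kinvgen k q) (Kinvgen_mul_Kgen k q)
      (Xgen_mul_Kgen k q))
    (mul_eq_smul_of_mul_eq_smul_of_inverse (Kgen_mul_Kinvgen k q) (Kinvgen_mul_Kgen k q)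
      (Ygen_mul_Kgen k q))
    (by rw [Kinvgen_mul_Kgen, Kgen_mul_Kinvgen, one_smul]) (by field_simp)

theorem Xgen_commute_Xgen_mul_Ygen_mul_Kgen :
    Commute (Xgen k q) (Xgen k q * Ygen k q * Kgen k q) :=
  commute_mul_mul_of_mul_eq_smul (one_smul k _).symm (Xgen_mul_Ygen k q) (Xgen_mul_Kgen k q)
    (by field_simp)

theorem Ygen_commute_Xgen_mul_Ygen_mul_Kgen :
    Commute (Ygen k q) (Xgen k q * Ygen k q * Kgen k q) :=
  commute_mul_mul_of_mul_eq_smul (Ygen_mul_Xgen hq) (one_smul k _).symm (Ygen_mul_Kgen k q)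
    (by field_simp)

theorem Xgen_mul_Ygen_mul_Kgen_mul_Egen_sub_Egen_mul :
    Xgen k q * Ygen k q * Kgen k q * Egen k q - Egen k q * (Xgen k q * Ygen k q * Kgen k q) =
      (-q • Xgen k q) * phi k q * Kgen k q := by
  have hCE : Xgen k q * Ygen k q * Kgen k q * Egen k q =
      q ^ 2 • (Xgen k q * Ygen k q * Egen k q * Kgen k q) := by
    rw [mul_assoc _ (Kgen k q), Kgen_mul_Egen hq]; simp only [mul_smul_comm, mul_assoc]
  have hEC : Egen k q * (Xgen k q * Ygen k q * Kgen k q) =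
      q • (Xgen k q * Xgen k q * Kgen k q) + Xgen k q * Ygen k q * Egen k q * Kgen k q := by
    rw [← mul_assoc, ← mul_assoc, Egen_mul_Xgen, smul_mul_assoc, mul_assoc (Xgen k q),
      Egen_mul_Ygen]
    simp only [mul_add, add_mul, smul_add, mul_smul_comm, smul_mul_assoc, smul_smul,
      mul_inv_cancel₀ hq, one_smul, mul_assoc]
  rw [hCE, hEC, phi_eq k q]
  simp only [mul_add, add_mul, smul_mul_assoc, mul_smul_comm, mul_assoc]
  match_scalars
  · field_simp
    ring
  · ring

end Casimir

theorem stmt10_general (k : Type) [Field k] (q : k) (hq : q ≠ 0) :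
    ∀ a : QSA k q,
      (Xgen k q * Ygen k q * Kgen k q) * a - a * (Xgen k q * Ygen k q * Kgen k q) ∈
        TwoSidedIdeal.span {phi k q} := by
  intro a
  have ha : a ∈ Algebra.adjoin k (Set.range (RingQuot.mkAlgHom k (QSARel k q) ∘
      FreeAlgebra.ι k)) := by
    rw [RingQuot.adjoin_range_mkAlgHom_comp_ι]; trivial
  refine TwoSidedIdeal.mul_sub_mul_mem_of_mem_adjoin _ ?_ ha
  have of_commute : ∀ g, Commute g (Xgen k q * Ygen k q * Kgen k q) →
      Xgen k q * Ygen k q * Kgen k q * g - g * (Xgen k q * Ygen k q * Kgen k q) ∈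
        TwoSidedIdeal.span {phi k q} := by
    intro g hg
    rw [hg.eq, sub_self]
    exact zero_mem _
  rintro _ ⟨g, rfl⟩
  cases g with
  | E =>
    rw [Function.comp_apply, ← Egen, Xgen_mul_Ygen_mul_Kgen_mul_Egen_sub_Egen_mul hq]
    exact TwoSidedIdeal.mul_mem_right _ _ _
      (TwoSidedIdeal.mul_mem_left _ _ _ (TwoSidedIdeal.subset_span rfl))
  | K => exact of_commute _ (Kgen_commute_Xgen_mul_Ygen_mul_Kgen hq)
  | Kinv => exact of_commute _ (Kinvgen_commute_Xgen_mul_Ygen_mul_Kgen hq)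
  | X => exact of_commute _ (Xgen_commute_Xgen_mul_Ygen_mul_Kgen hq)
  | Y => exact of_commute _ (Ygen_commute_Xgen_mul_Ygen_mul_Kgen hq)

/-- `C = XYK` is central in `𝒜/(φ)`. -/
theorem stmt10 (k : Type) [Field k] (q : k) (hq : q ≠ 0)
    (hq' : ∀ n : ℕ, n ≠ 0 → q ^ n ≠ 1) :
    ∀ a : QSA k q,
      (Xgen k q * Ygen k q * Kgen k q) * a - a * (Xgen k q * Ygen k q * Kgen k q) ∈
        TwoSidedIdeal.span {phi k q} :=
  stmt10_general k q hq
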